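/- arXiv:1311.7474 — 4 statements merged into one kernel-verified Lean document; each statement's English description precedes it below -/
import Mathlib

section
/- There exists a constant c > 0 depending only on D such that for every n ≥ 2, every M > 0, every θ0 ∈ S^D(M), and all D ≤ α1 < α2 ≤ 2D: Var_{θ0}( B̂_{n,k_n}²(α1) − B̂_{n,k_n}²(α2) ) ≤ c (α2 − α1)² (log n)² ( B_{n,k_n}²(α2;θ0)/n + n^{−(1+4D)/(1+2D)} ). Here Var_{θ0}( B̂_{n,k_n}²(α1) − B̂_{n,k_n}²(α2) ) = ∑_{i=1}^{k_n} ( i^{2+4α1}/(i^{1+2α1}+n)² − i^{2+4α2}/(i^{1+2α2}+n)² )² (2θ0,i²/n + 4/n²). -/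
open MeasureTheory ProbabilityTheory Real Filter
open scoped NNReal ENNReal

noncomputable section

/-- The real index corresponding to coordinate `i : ℕ` is `i + 1`
(sequences are indexed by `1, 2, 3, ...` in the paper). -/
def idx (i : ℕ) : ℝ := (i : ℝ) + 1

/-- ℓ²-norm of a sequence. -/
def l2norm (x : ℕ → ℝ) : ℝ := Real.sqrt (∑' i, (x i) ^ 2)

/-- The Sobolev ball `S^β(M) = {θ ∈ ℓ² : ∑ i^{2β} θ_i² ≤ M}`. -/
def sobolev (β M : ℝ) : Set (ℕ → ℝ) :=
  {θ | Summable (fun i => (θ i) ^ 2) ∧ ∑' i, (idx i) ^ (2 * β) * (θ i) ^ 2 ≤ M}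

/-- Truncation level `k_n = n^{2/(1+4D)}`. -/
def khat (D : ℝ) (n : ℕ) : ℕ := ⌊(n : ℝ) ^ (2 / (1 + 4 * D))⌋₊

/-- Truncated squared bias `B_{n,k}²(α;θ0) = ∑_{i=1}^k i^{2+4α} θ0_i²/(i^{1+2α}+n)²`. -/
def biasSqTrunc (n k : ℕ) (α : ℝ) (θ0 : ℕ → ℝ) : ℝ :=
  ∑ i ∈ Finset.range k, (idx i) ^ (2 + 4 * α) * (θ0 i) ^ 2 / ((idx i) ^ (1 + 2 * α) + n) ^ 2

/-- The constant `C0 = ((1+4D)² log(25 C1⁻² γ⁻¹)/2) ∨ 0`. -/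
def C0def (D C1 γ : ℝ) : ℝ := max ((1 + 4 * D) ^ 2 * Real.log (25 * (C1 ^ 2)⁻¹ * γ⁻¹) / 2) 0

/-- The cap `(2D − C0/log n) ∨ D`. -/
def capVal (D C1 γ : ℝ) (n : ℕ) : ℝ := max (2 * D - C0def D C1 γ / Real.log n) D

open Classical in
/-- `(inf S) ∧ c` with the convention that the infimum of the empty set is `+∞`. -/
def infAux (S : Set ℝ) (c : ℝ) : ℝ := if S.Nonempty then min (sInf S) c else c

/-- `α̲_n`. -/
def underAlpha (D C1 γ : ℝ) (n : ℕ) (θ0 : ℕ → ℝ) : ℝ :=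
  infAux {α | D ≤ α ∧ C1 ^ 2 / 2 * (n : ℝ) ^ (-(2 * α) / (1 + 2 * α)) ≤ biasSqTrunc n (khat D n) α θ0}
    (capVal D C1 γ n)

/-- `ᾱ_n`. -/
def overAlpha (D C1 γ : ℝ) (n : ℕ) (θ0 : ℕ → ℝ) : ℝ :=
  infAux {α | D ≤ α ∧ 2 * C1 ^ 2 * (n : ℝ) ^ (-(2 * α) / (1 + 2 * α)) ≤ biasSqTrunc n (khat D n) α θ0}
    (capVal D C1 γ n)

/-! With `t = i^(1+2α)` the weight of `θᵢ²` in the squared bias is `(t/(t+n))²`. Raising `α` from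
`α₁` to `α₂` multiplies `t` by `i^(2(α₂-α₁))`, so the relative change `1 - t₁/t₂` is at most
`2(α₂-α₁) log i ≤ 4(α₂-α₁) log n` for `i ≤ k_n ≤ n²`. The change of the weight is then at most
`2(1 - t₁/t₂) w₂ n/(t₁+n)` with `w₂ = (t₂/(t₂+n))²`. Its square is bounded both by a multiple of
`w₂`, which produces the `B²(α₂)/n` term, and by a multiple of `min(1, (n/t₁)²)`, whose sum over `i`
is `O(n^(1/(1+2α₁)))`; since `α₁ ≥ D`, dividing by `n²` leaves at most `n^(-(1+4D)/(1+2D))`. -/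

open Finset

def biasFactorSq (N α x : ℝ) : ℝ := x ^ (2 + 4 * α) / (x ^ (1 + 2 * α) + N) ^ 2

lemma biasFactorSq_eq {x : ℝ} (hx : 0 ≤ x) (N α : ℝ) :
    biasFactorSq N α x = (x ^ (1 + 2 * α) / (x ^ (1 + 2 * α) + N)) ^ 2 := by
  rw [biasFactorSq, div_pow, ← Real.rpow_mul_natCast hx]
  ring_nf

lemma one_le_idx (i : ℕ) : 1 ≤ idx i := by
  simp [idx]

lemma biasFactorSq_nonneg {N α x : ℝ} (hx : 0 ≤ x) : 0 ≤ biasFactorSq N α x := by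
  rw [biasFactorSq_eq hx]; positivity

lemma abs_sq_div_add_sub_sq_div_add_le {N t₁ t₂ : ℝ} (hN : 0 ≤ N) (ht₁ : 0 < t₁) (ht : t₁ ≤ t₂) :
    |(t₂ / (t₂ + N)) ^ 2 - (t₁ / (t₁ + N)) ^ 2|
      ≤ 2 * (1 - t₁ / t₂) * (t₂ / (t₂ + N)) ^ 2 * (N / (t₁ + N)) := by
  have ht₂ : 0 < t₂ := ht₁.trans_le ht
  have hgap : t₂ / (t₂ + N) - t₁ / (t₁ + N)
      = (1 - t₁ / t₂) * (t₂ / (t₂ + N)) * (N / (t₁ + N)) := by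
    field_simp
    ring
  have hle : t₁ / (t₁ + N) ≤ t₂ / (t₂ + N) := by
    rw [div_le_div_iff₀ (by positivity) (by positivity)]
    nlinarith
  have hh₁ : 0 ≤ t₁ / (t₁ + N) := by positivity
  rw [abs_of_nonneg (sub_nonneg.2 (pow_le_pow_left₀ hh₁ hle 2)), sq_sub_sq]
  calc _ ≤ (2 * (t₂ / (t₂ + N))) * ((1 - t₁ / t₂) * (t₂ / (t₂ + N)) * (N / (t₁ + N))) := by
        rw [← hgap]; exact mul_le_mul_of_nonneg_right (by linarith) (by linarith)
    _ = _ := by ring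

lemma one_sub_rpow_div_rpow_le {x : ℝ} (hx : 0 < x) (a b : ℝ) :
    1 - x ^ a / x ^ b ≤ (b - a) * Real.log x := by
  have h := Real.one_sub_inv_le_log_of_pos
    (div_pos (Real.rpow_pos_of_pos hx b) (Real.rpow_pos_of_pos hx a))
  rwa [inv_div, Real.log_div (by positivity) (by positivity), Real.log_rpow hx, Real.log_rpow hx,
    ← sub_mul] at h

lemma min_one_sq_div_rpow_le {N x p : ℝ} (hN : 0 ≤ N) (hx : 0 < x) (hp : 1 ≤ p) :
    min 1 ((N / x ^ p) ^ 2) ≤ min 1 ((N ^ p⁻¹ / x) ^ 2) := by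
  set y := N ^ p⁻¹ / x
  have hy : 0 ≤ y := by positivity
  have hNy : N / x ^ p = y ^ p := by
    rw [Real.div_rpow (by positivity) hx.le, ← Real.rpow_mul hN, inv_mul_cancel₀ (by positivity),
      Real.rpow_one]
  rw [hNy]
  rcases le_or_gt y 1 with hy1 | hy1
  · gcongr
    exact Real.rpow_le_self_of_le_one hy hy1 hp
  · exact (min_le_left _ _).trans (le_min le_rfl (by nlinarith))

lemma sum_range_min_one_sq_div_le {c : ℝ} (hc : 0 ≤ c) (k : ℕ) :
    ∑ i ∈ range k, min 1 ((c / ((i : ℝ) + 1)) ^ 2) ≤ 3 * c := by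
  set m := ⌊c⌋₊
  have hm : (m : ℝ) ≤ c := Nat.floor_le hc
  have hm' : c < m + 1 := Nat.lt_floor_add_one c
  have head : ∑ i ∈ range m, min 1 ((c / ((i : ℝ) + 1)) ^ 2) ≤ c := by
    calc _ ≤ ∑ i ∈ range m, (1 : ℝ) := sum_le_sum fun i _ => min_le_left _ _
      _ ≤ c := by simpa using hm
  have tail : ∑ i ∈ Ico m (m + k), min 1 ((c / ((i : ℝ) + 1)) ^ 2) ≤ 2 * c := by
    calc _ ≤ ∑ i ∈ Ico m (m + k), c ^ 2 * (((i + 1 : ℕ) : ℝ) ^ 2)⁻¹ :=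
          sum_le_sum fun i _ => (min_le_right _ _).trans_eq (by push_cast; field_simp)
      _ = c ^ 2 * ∑ j ∈ Ioo m (m + k + 1), ((j : ℝ) ^ 2)⁻¹ := by
          rw [← mul_sum, sum_Ico_add' (fun j : ℕ => ((j : ℝ) ^ 2)⁻¹), Ico_add_one_left_eq_Ioo]
      _ ≤ c ^ 2 * (2 / (m + 1)) := by gcongr; exact sum_Ioo_inv_sq_le _ _
      _ ≤ 2 * c := by
          rw [mul_div_assoc', div_le_iff₀ (by positivity)]
          nlinarith
  calc _ ≤ ∑ i ∈ range (m + k), min 1 ((c / ((i : ℝ) + 1)) ^ 2) :=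
        sum_le_sum_of_subset_of_nonneg (range_subset_range.2 (by omega)) fun _ _ _ => by positivity
    _ ≤ 3 * c := by
        rw [← sum_range_add_sum_Ico _ (Nat.le_add_right m k)]
        linarith

lemma sq_biasFactorSq_sub_le {N α₁ α₂ x : ℝ} (hN : 0 < N) (hx : 1 ≤ x) (hα : α₁ ≤ α₂) :
    (biasFactorSq N α₁ x - biasFactorSq N α₂ x) ^ 2
        ≤ (4 * (α₂ - α₁) * Real.log x) ^ 2 * biasFactorSq N α₂ x ∧
      (biasFactorSq N α₁ x - biasFactorSq N α₂ x) ^ 2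
        ≤ (4 * (α₂ - α₁) * Real.log x) ^ 2 * min 1 ((N / x ^ (1 + 2 * α₁)) ^ 2) := by
  have hx₀ : 0 < x := one_pos.trans_le hx
  rw [biasFactorSq_eq hx₀.le, biasFactorSq_eq hx₀.le]
  set t₁ := x ^ (1 + 2 * α₁)
  set t₂ := x ^ (1 + 2 * α₂)
  set E := 4 * (α₂ - α₁) * Real.log x
  set g := (t₂ / (t₂ + N)) ^ 2
  set m := N / (t₁ + N)
  have ht₁ : 0 < t₁ := Real.rpow_pos_of_pos hx₀ _
  have ht : t₁ ≤ t₂ := Real.rpow_le_rpow_of_exponent_le hx (by linarith)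
  have hr₀ : 0 ≤ 1 - t₁ / t₂ := by
    rw [sub_nonneg, div_le_one (ht₁.trans_le ht)]; exact ht
  have hr : 2 * (1 - t₁ / t₂) ≤ E := by
    have := one_sub_rpow_div_rpow_le hx₀ (1 + 2 * α₁) (1 + 2 * α₂)
    linarith
  have hg₀ : 0 ≤ g := by positivity
  have hg₁ : g ≤ 1 := by
    exact pow_le_one₀ (by positivity) ((div_le_one (by positivity)).2 (by linarith))
  have hm₀ : 0 ≤ m := by positivity
  have hm₁ : m ≤ 1 := (div_le_one (by positivity)).2 (by linarith)
  have hmt : m ≤ N / t₁ := div_le_div_of_nonneg_left hN.le ht₁ (by linarith)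
  have hdiff : ((t₁ / (t₁ + N)) ^ 2 - g) ^ 2 ≤ (E * g * m) ^ 2 := by
    rw [← sq_abs, abs_sub_comm]
    have := abs_sq_div_add_sub_sq_div_add_le hN.le ht₁ ht
    gcongr
    exact this.trans (by gcongr)
  have hgm : g * m ^ 2 ≤ 1 := mul_le_one₀ hg₁ (by positivity) (pow_le_one₀ hm₀ hm₁)
  have hm_sq : m ^ 2 ≤ min 1 ((N / t₁) ^ 2) :=
    le_min (pow_le_one₀ hm₀ hm₁) (pow_le_pow_left₀ hm₀ hmt 2)
  constructor
  · calc _ ≤ (E * g * m) ^ 2 := hdiff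
      _ = E ^ 2 * g * (g * m ^ 2) := by ring
      _ ≤ E ^ 2 * g * 1 := by gcongr
      _ = E ^ 2 * g := mul_one _
  · calc _ ≤ (E * g * m) ^ 2 := hdiff
      _ = E ^ 2 * (g ^ 2 * m ^ 2) := by ring
      _ ≤ E ^ 2 * (1 * min 1 ((N / t₁) ^ 2)) := by
          gcongr
          exact pow_le_one₀ hg₀ hg₁
      _ = E ^ 2 * min 1 ((N / t₁) ^ 2) := by rw [one_mul]

lemma sum_sq_biasFactorSq_sub_mul_le {N : ℝ} (hN : 1 ≤ N) {k : ℕ} (hk : (k : ℝ) ≤ N ^ 2)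
    (θ : ℕ → ℝ) {α₁ α₂ : ℝ} (hα₁ : 0 ≤ α₁) (hα : α₁ ≤ α₂) :
    ∑ i ∈ range k, (biasFactorSq N α₁ (idx i) - biasFactorSq N α₂ (idx i)) ^ 2
        * (2 * θ i ^ 2 / N + 4 / N ^ 2)
      ≤ (8 * (α₂ - α₁) * Real.log N) ^ 2 *
        (2 * (∑ i ∈ range k, biasFactorSq N α₂ (idx i) * θ i ^ 2) / N
          + 12 * (N ^ (1 + 2 * α₁)⁻¹ / N ^ 2)) := by
  have hN₀ : 0 < N := one_pos.trans_le hN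
  set E := 8 * (α₂ - α₁) * Real.log N
  set q : ℕ → ℝ := fun i => min 1 ((N ^ (1 + 2 * α₁)⁻¹ / idx i) ^ 2)
  have hterm : ∀ i ∈ range k,
      (biasFactorSq N α₁ (idx i) - biasFactorSq N α₂ (idx i)) ^ 2 * (2 * θ i ^ 2 / N + 4 / N ^ 2)
        ≤ E ^ 2 * (2 / N) * (biasFactorSq N α₂ (idx i) * θ i ^ 2) + E ^ 2 * (4 / N ^ 2) * q i := by
    intro i hi
    have hx := one_le_idx i
    have hxk : idx i ≤ N ^ 2 :=
      le_trans (by rw [idx]; exact_mod_cast mem_range.1 hi) hk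
    have hlog : (4 * (α₂ - α₁) * Real.log (idx i)) ^ 2 ≤ E ^ 2 := by
      have hδ : 0 ≤ α₂ - α₁ := by linarith
      have hlogx : Real.log (idx i) ≤ 2 * Real.log N := by
        calc _ ≤ Real.log (N ^ 2) := Real.log_le_log (by positivity) hxk
          _ = 2 * Real.log N := by rw [Real.log_pow]; norm_num
      exact pow_le_pow_left₀ (mul_nonneg (by positivity) (Real.log_nonneg hx)) (by nlinarith) 2
    obtain ⟨hbias, hvar⟩ := sq_biasFactorSq_sub_le hN₀ hx hα
    have hq : min 1 ((N / idx i ^ (1 + 2 * α₁)) ^ 2) ≤ q i :=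
      min_one_sq_div_rpow_le hN₀.le (by linarith) (by linarith)
    have hg : 0 ≤ biasFactorSq N α₂ (idx i) := biasFactorSq_nonneg (by linarith)
    have h₁ := hbias.trans (mul_le_mul_of_nonneg_right hlog hg)
    have h₂ := hvar.trans (mul_le_mul hlog hq (by positivity) (sq_nonneg _))
    calc _ = (biasFactorSq N α₁ (idx i) - biasFactorSq N α₂ (idx i)) ^ 2 * (2 * θ i ^ 2 / N)
          + (biasFactorSq N α₁ (idx i) - biasFactorSq N α₂ (idx i)) ^ 2 * (4 / N ^ 2) :=
          mul_add _ _ _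
      _ ≤ E ^ 2 * biasFactorSq N α₂ (idx i) * (2 * θ i ^ 2 / N) + E ^ 2 * q i * (4 / N ^ 2) := by
          gcongr
      _ = _ := by ring
  calc _ ≤ ∑ i ∈ range k, (E ^ 2 * (2 / N) * (biasFactorSq N α₂ (idx i) * θ i ^ 2)
          + E ^ 2 * (4 / N ^ 2) * q i) := sum_le_sum hterm
    _ = E ^ 2 * (2 / N) * ∑ i ∈ range k, biasFactorSq N α₂ (idx i) * θ i ^ 2
          + E ^ 2 * (4 / N ^ 2) * ∑ i ∈ range k, q i := by
        rw [sum_add_distrib, mul_sum, mul_sum]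
    _ ≤ E ^ 2 * (2 / N) * ∑ i ∈ range k, biasFactorSq N α₂ (idx i) * θ i ^ 2
          + E ^ 2 * (4 / N ^ 2) * (3 * N ^ (1 + 2 * α₁)⁻¹) := by
        gcongr
        exact sum_range_min_one_sq_div_le (by positivity) k
    _ = _ := by ring

lemma biasSqTrunc_eq_sum (n k : ℕ) (α : ℝ) (θ : ℕ → ℝ) :
    biasSqTrunc n k α θ = ∑ i ∈ range k, biasFactorSq n α (idx i) * θ i ^ 2 := by
  simp only [biasSqTrunc, biasFactorSq, mul_div_right_comm]

lemma biasSqTrunc_nonneg (n k : ℕ) (α : ℝ) (θ : ℕ → ℝ) : 0 ≤ biasSqTrunc n k α θ := by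
  rw [biasSqTrunc_eq_sum]
  exact sum_nonneg fun i _ =>
    mul_nonneg (biasFactorSq_nonneg (zero_le_one.trans (one_le_idx i))) (sq_nonneg _)

lemma khat_le_sq {D : ℝ} (hD : 0 ≤ D) {n : ℕ} (hn : 1 ≤ n) : (khat D n : ℝ) ≤ (n : ℝ) ^ 2 := by
  have hn' : (1 : ℝ) ≤ n := by exact_mod_cast hn
  calc (khat D n : ℝ) ≤ (n : ℝ) ^ (2 / (1 + 4 * D)) := Nat.floor_le (by positivity)
    _ ≤ (n : ℝ) ^ (2 : ℝ) := by
        gcongr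
        exact div_le_self zero_le_two (by linarith)
    _ = (n : ℝ) ^ 2 := Real.rpow_two _

lemma rpow_inv_div_sq_le {N D α : ℝ} (hN : 1 ≤ N) (hD : 0 ≤ D) (hα : D ≤ α) :
    N ^ (1 + 2 * α)⁻¹ / N ^ 2 ≤ N ^ (-(1 + 4 * D) / (1 + 2 * D)) := by
  rw [← Real.rpow_two, ← Real.rpow_sub (one_pos.trans_le hN)]
  apply Real.rpow_le_rpow_of_exponent_le hN
  rw [show -(1 + 4 * D) / (1 + 2 * D) = (1 + 2 * D)⁻¹ - 2 by field_simp; ring]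
  gcongr

/-- Lipschitz-type variance bound for the bias estimator
(the variance is written out explicitly as in the statement). -/
theorem stmt_6 (D : ℝ) (hD : 0 < D) :
    ∃ c : ℝ, 0 < c ∧ ∀ (n : ℕ), 2 ≤ n → ∀ (M : ℝ), 0 < M → ∀ θ0 ∈ sobolev D M,
      ∀ α1 α2 : ℝ, D ≤ α1 → α1 < α2 → α2 ≤ 2 * D →
      (∑ i ∈ Finset.range (khat D n),
          ((idx i) ^ (2 + 4 * α1) / ((idx i) ^ (1 + 2 * α1) + n) ^ 2
            - (idx i) ^ (2 + 4 * α2) / ((idx i) ^ (1 + 2 * α2) + n) ^ 2) ^ 2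
          * (2 * (θ0 i) ^ 2 / n + 4 / (n : ℝ) ^ 2))
        ≤ c * (α2 - α1) ^ 2 * (Real.log n) ^ 2 *
            (biasSqTrunc n (khat D n) α2 θ0 / n + (n : ℝ) ^ (-(1 + 4 * D) / (1 + 2 * D))) := by
  refine ⟨768, by norm_num, fun n hn _ _ θ0 _ α1 α2 hDα1 h12 _ => ?_⟩
  have hn₁ : (1 : ℝ) ≤ n := by exact_mod_cast one_le_two.trans hn
  have hB : 0 ≤ biasSqTrunc n (khat D n) α2 θ0 / n := by
    have := biasSqTrunc_nonneg n (khat D n) α2 θ0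
    positivity
  have hrate := rpow_inv_div_sq_le hn₁ hD.le hDα1
  calc _ ≤ (8 * (α2 - α1) * Real.log n) ^ 2 *
          (2 * biasSqTrunc n (khat D n) α2 θ0 / n
            + 12 * ((n : ℝ) ^ (1 + 2 * α1)⁻¹ / (n : ℝ) ^ 2)) := by
        rw [biasSqTrunc_eq_sum]
        exact sum_sq_biasFactorSq_sub_mul_le hn₁ (khat_le_sq hD.le (one_le_two.trans hn)) θ0
          (hD.le.trans hDα1) h12.le
    _ ≤ (8 * (α2 - α1) * Real.log n) ^ 2 *
          (12 * (biasSqTrunc n (khat D n) α2 θ0 / n + (n : ℝ) ^ (-(1 + 4 * D) / (1 + 2 * D)))) := by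
        gcongr
        rw [mul_div_assoc]
        linarith
    _ = _ := by ring
end
end

section
/- For every k > 0, m ≥ 0 and every real N ≥ e^{2m/k}, the tail sum over integers satisfies ∑_{i > N} i^{−1−k} (log i)^m ≤ (1/N + 2/k) (log N)^m N^{−k}. -/
/-!
Since `y ↦ y ^ m * exp (-a * y)` decreases for `y ≥ m / a`, the hypothesis `log N ≥ 2m/k` makes
`x ↦ (log x) ^ m * x ^ (-k/2)` decreasing on `[N, ∞)`, so every term with `i > N` is at most
`C * i ^ (-1 - k/2)` with `C = (log N) ^ m * N ^ (-k/2)`. The remaining tail of the `p`-series is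
bounded by its first term `(⌊N⌋ + 1) ^ (-1 - k/2) ≤ N ^ (-1 - k/2)` plus a telescoping sum: by
convexity of `t ↦ t ^ (-a)`, `a * i ^ (-1 - a) ≤ (i - 1) ^ (-a) - i ^ (-a)`, and the differences
from `⌊N⌋ + 1` on add up to at most `N ^ (-a)`.
-/

open Real

theorem antitoneOn_rpow_mul_exp_neg {a m : ℝ} (ha : 0 < a) (hm : 0 ≤ m) :
    AntitoneOn (fun y : ℝ => y ^ m * exp (-(a * y))) (Set.Ici (m / a)) := by
  intro s hs t ht hst
  rw [Set.mem_Ici, div_le_iff₀' ha] at hs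
  dsimp only
  rcases (hm.trans hs).eq_or_lt with has | has
  · obtain rfl : s = 0 := by simpa [ha.ne'] using has.symm
    obtain rfl : m = 0 := le_antisymm (by simpa using hs) hm
    simpa using mul_nonneg ha.le hst
  have hs0 : 0 < s := pos_of_mul_pos_right has ha.le
  have hpow : (t / s) ^ m ≤ exp (a * (t - s)) := calc
    (t / s) ^ m ≤ exp (t / s - 1) ^ m := by
      gcongr
      · exact div_nonneg (hs0.le.trans hst) hs0.le
      · linarith [add_one_le_exp (t / s - 1)]
    _ = exp ((t - s) / s * m) := by rw [← exp_mul, sub_div, div_self hs0.ne']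
    _ ≤ exp (a * (t - s)) := by
      refine exp_le_exp.mpr ?_
      rw [div_mul_eq_mul_div, div_le_iff₀ hs0]
      nlinarith [sub_nonneg.mpr hst]
  calc t ^ m * exp (-(a * t)) = s ^ m * (t / s) ^ m * exp (-(a * t)) := by
        rw [div_rpow (hs0.le.trans hst) hs0.le, mul_div_cancel₀ _ (rpow_pos_of_pos hs0 m).ne']
    _ ≤ s ^ m * exp (a * (t - s)) * exp (-(a * t)) := by gcongr
    _ = s ^ m * exp (-(a * s)) := by rw [mul_assoc, ← exp_add]; ring_nf

theorem log_rpow_mul_rpow_neg_le {a m N x : ℝ} (ha : 0 < a) (hm : 0 ≤ m) (hN : exp (m / a) ≤ N)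
    (hx : N ≤ x) : log x ^ m * x ^ (-a) ≤ log N ^ m * N ^ (-a) := by
  have hN0 : 0 < N := (exp_pos _).trans_le hN
  have hlogN : log N ∈ Set.Ici (m / a) := (le_log_iff_exp_le hN0).mpr hN
  have hlogx : log x ∈ Set.Ici (m / a) := hlogN.trans (log_le_log hN0 hx)
  rw [rpow_def_of_pos hN0, rpow_def_of_pos (hN0.trans_le hx), mul_neg, mul_neg, mul_comm (log x),
    mul_comm (log N)]
  exact antitoneOn_rpow_mul_exp_neg ha hm hlogN hlogx (log_le_log hN0 hx)

theorem rpow_neg_add_mul_sub_mul_rpow_le {a x y : ℝ} (ha : 0 ≤ a) (hx : 0 < x) (hy : 0 < y) :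
    x ^ (-a) + a * (x - y) * x ^ (-(1 + a)) ≤ y ^ (-a) := by
  have hexp : 1 + a * (x - y) / x ≤ (y / x) ^ (-a) := by
    rw [rpow_def_of_pos (div_pos hy hx)]
    have hlog : log (y / x) ≤ y / x - 1 := log_le_sub_one_of_pos (div_pos hy hx)
    have : a * (x - y) / x = (y / x - 1) * -a := by field_simp; ring
    nlinarith [add_one_le_exp (log (y / x) * -a)]
  calc x ^ (-a) + a * (x - y) * x ^ (-(1 + a)) = x ^ (-a) * (1 + a * (x - y) / x) := by
        rw [neg_add, rpow_add hx, rpow_neg_one]; field_simp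
    _ ≤ x ^ (-a) * (y / x) ^ (-a) := by gcongr
    _ = y ^ (-a) := by rw [← mul_rpow hx.le (div_pos hy hx).le, mul_div_cancel₀ _ hx.ne']

theorem tsum_add_succ_rpow_neg_le {a : ℝ} (ha : 0 < a) {n : ℕ} (hn : 0 < n) :
    ∑' j : ℕ, ((n + j + 1 : ℕ) : ℝ) ^ (-(1 + a)) ≤ (n : ℝ) ^ (-a) / a := by
  set b : ℕ → ℝ := fun j => ((n + j : ℕ) : ℝ) ^ (-a)
  have hstep (j : ℕ) : ((n + j + 1 : ℕ) : ℝ) ^ (-(1 + a)) ≤ (b j - b (j + 1)) / a := by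
    have hpos : (0 : ℝ) < (n + j : ℕ) := by positivity
    have := rpow_neg_add_mul_sub_mul_rpow_le (x := (n + j + 1 : ℕ)) ha.le (by positivity) hpos
    simp only [b, ← add_assoc]
    push_cast at this ⊢
    rw [add_sub_cancel_left, mul_one] at this
    rw [le_div_iff₀ ha]
    linarith
  refine Real.tsum_le_of_sum_range_le (fun _ => by positivity) fun K => ?_
  calc ∑ j ∈ Finset.range K, ((n + j + 1 : ℕ) : ℝ) ^ (-(1 + a))
      ≤ ∑ j ∈ Finset.range K, (b j - b (j + 1)) / a := Finset.sum_le_sum fun j _ => hstep j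
    _ = (b 0 - b K) / a := by rw [← Finset.sum_div, Finset.sum_range_sub']
    _ ≤ (n : ℝ) ^ (-a) / a := by
      gcongr
      simp only [b, add_zero, sub_le_self_iff]
      positivity

theorem summable_ite_lt_rpow_neg {a : ℝ} (ha : 0 < a) (N : ℝ) :
    Summable fun i : ℕ => if N < i then (i : ℝ) ^ (-(1 + a)) else 0 := by
  refine .of_nonneg_of_le (fun i => by split_ifs <;> positivity) (fun i => ?_)
    (Real.summable_nat_rpow.mpr (by linarith : -(1 + a) < -1))
  split_ifs
  exacts [le_rfl, by positivity]

theorem tsum_ite_lt_rpow_neg_le {a N : ℝ} (ha : 0 < a) (hN : 0 < N) :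
    ∑' i : ℕ, (if N < i then (i : ℝ) ^ (-(1 + a)) else 0) ≤ N ^ (-(1 + a)) + N ^ (-a) / a := by
  set g : ℕ → ℝ := fun i => if N < i then (i : ℝ) ^ (-(1 + a)) else 0
  set n := ⌊N⌋₊ + 1
  have hNn : N < n := by simpa [n] using Nat.lt_floor_add_one N
  have hn : 0 < n := Nat.succ_pos _
  have hg_tail (j : ℕ) : g (j + n) = ((n + j : ℕ) : ℝ) ^ (-(1 + a)) := by
    have : N < (n + j : ℕ) := hNn.trans_le (by norm_cast; omega)
    simp only [g]
    rw [add_comm j, if_pos this]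
  have hg_head : ∑ i ∈ Finset.range n, g i = 0 := Finset.sum_eq_zero fun i hi => by
    have : (i : ℝ) ≤ N := (Nat.le_floor_iff hN.le).mp (Nat.lt_succ_iff.mp (Finset.mem_range.mp hi))
    simp only [g, if_neg this.not_gt]
  have hsumm : Summable fun j => g (j + n) :=
    (summable_nat_add_iff n).mpr (summable_ite_lt_rpow_neg ha N)
  rw [← (summable_ite_lt_rpow_neg ha N).sum_add_tsum_nat_add n, hg_head, zero_add,
    hsumm.tsum_eq_zero_add]
  simp only [hg_tail]
  refine add_le_add ?_ ?_
  · exact rpow_le_rpow_of_nonpos hN (by simpa using hNn.le) (by linarith)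
  · calc ∑' j : ℕ, ((n + (j + 1) : ℕ) : ℝ) ^ (-(1 + a)) ≤ (n : ℝ) ^ (-a) / a :=
          tsum_add_succ_rpow_neg_le ha hn
      _ ≤ N ^ (-a) / a :=
          div_le_div_of_nonneg_right (rpow_le_rpow_of_nonpos hN hNn.le (by linarith)) ha.le

theorem stmt_7 (k m N : ℝ) (hk : 0 < k) (hm : 0 ≤ m) (hN : Real.exp (2 * m / k) ≤ N) :
    (∑' i : ℕ, if N < (i : ℝ) then (i : ℝ) ^ (-(1 + k)) * (Real.log i) ^ m else 0)
      ≤ (1 / N + 2 / k) * (Real.log N) ^ m * N ^ (-k) := by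
  have hk2 : 0 < k / 2 := half_pos hk
  have hN0 : 0 < N := (exp_pos _).trans_le hN
  have hN' : exp (m / (k / 2)) ≤ N := by rwa [div_div_eq_mul_div, mul_comm]
  set C := log N ^ m * N ^ (-(k / 2))
  have hlogN : 0 ≤ log N := log_nonneg ((one_le_exp (by positivity)).trans hN)
  have hC : 0 ≤ C := mul_nonneg (rpow_nonneg hlogN _) (rpow_nonneg hN0.le _)
  have hterm (i : ℕ) : (if N < i then (i : ℝ) ^ (-(1 + k)) * log i ^ m else 0)
      ≤ C * if N < i then (i : ℝ) ^ (-(1 + k / 2)) else 0 := by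
    split_ifs with hi
    · have hi0 : (0 : ℝ) < i := hN0.trans hi
      calc (i : ℝ) ^ (-(1 + k)) * log i ^ m
          = (log i ^ m * (i : ℝ) ^ (-(k / 2))) * (i : ℝ) ^ (-(1 + k / 2)) := by
            rw [show -(1 + k) = -(1 + k / 2) + -(k / 2) by ring, rpow_add hi0]; ring
        _ ≤ C * (i : ℝ) ^ (-(1 + k / 2)) := by
            gcongr; exact log_rpow_mul_rpow_neg_le hk2 hm hN' hi.le
    · simp
  have hsumm := (summable_ite_lt_rpow_neg hk2 N).mul_left C
  calc _ ≤ ∑' i : ℕ, C * (if N < i then (i : ℝ) ^ (-(1 + k / 2)) else 0) :=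
        (hsumm.of_nonneg_of_le (fun i => by split_ifs <;> positivity) hterm).tsum_le_tsum
          hterm hsumm
    _ = C * ∑' i : ℕ, (if N < i then (i : ℝ) ^ (-(1 + k / 2)) else 0) := tsum_mul_left
    _ ≤ C * (N ^ (-(1 + k / 2)) + N ^ (-(k / 2)) / (k / 2)) := by
        gcongr; exact tsum_ite_lt_rpow_neg_le hk2 hN0
    _ = _ := by
        rw [neg_add, rpow_add hN0, rpow_neg_one, show -k = -(k / 2) + -(k / 2) by ring,
          rpow_add hN0]
        field_simp
        ring
end

section
/- Let D, C1 > 0, γ ∈ (0,1), C0 = ((1+4D)² log(25 C1^{−2} γ^{−1})/2) ∨ 0, and n ≥ 2. For every θ0 ∈ ℓ², the quantities α̲_n and ᾱ_n satisfy n^{−α̲_n/(1+2α̲_n)} ≤ 2 n^{−ᾱ_n/(1+2ᾱ_n)}. -/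
open MeasureTheory ProbabilityTheory Real Filter
open scoped NNReal ENNReal

noncomputable section

/-! ### Auxiliary lemmas -/

lemma idx_pos (i : ℕ) : (0:ℝ) < idx i := by
  unfold idx; positivity

lemma idx_one_le (i : ℕ) : (1:ℝ) ≤ idx i := by
  unfold idx; exact le_add_of_nonneg_left (Nat.cast_nonneg i)

/-- rewrite a term of the bias as `(t/(t+n))² θ²` with `t = idx i ^ (1+2α)`. -/
lemma bias_term_eq (n : ℕ) (α : ℝ) (θ : ℝ) (i : ℕ) :
    (idx i) ^ (2 + 4 * α) * θ ^ 2 / ((idx i) ^ (1 + 2 * α) + n) ^ 2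
      = ((idx i) ^ (1 + 2 * α) / ((idx i) ^ (1 + 2 * α) + n)) ^ 2 * θ ^ 2 := by
  have h2 : (2 + 4 * α) = (1 + 2 * α) * 2 := by ring
  have hpos : (0:ℝ) < (idx i) ^ (1 + 2 * α) := Real.rpow_pos_of_pos (idx_pos i) _
  have hden : (0:ℝ) < (idx i) ^ (1 + 2 * α) + n := by positivity
  rw [h2, Real.rpow_mul (idx_pos i).le, Real.rpow_two, div_pow]
  field_simp

lemma biasSqTrunc_mono (n k : ℕ) (θ0 : ℕ → ℝ) :
    Monotone fun α => biasSqTrunc n k α θ0 := by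
  intro a b hab
  unfold biasSqTrunc
  apply Finset.sum_le_sum
  intro i _
  rw [bias_term_eq, bias_term_eq]
  have hta : (0:ℝ) < (idx i) ^ (1 + 2 * a) := Real.rpow_pos_of_pos (idx_pos i) _
  have htb : (0:ℝ) < (idx i) ^ (1 + 2 * b) := Real.rpow_pos_of_pos (idx_pos i) _
  have hle : (idx i) ^ (1 + 2 * a) ≤ (idx i) ^ (1 + 2 * b) :=
    Real.rpow_le_rpow_of_exponent_le (idx_one_le i) (by linarith)
  have hnn : (0:ℝ) ≤ (n:ℝ) := Nat.cast_nonneg n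
  have key : (idx i) ^ (1 + 2 * a) / ((idx i) ^ (1 + 2 * a) + n)
      ≤ (idx i) ^ (1 + 2 * b) / ((idx i) ^ (1 + 2 * b) + n) := by
    rw [div_le_div_iff₀ (by linarith) (by linarith)]
    nlinarith
  have h1 : (0:ℝ) ≤ (idx i) ^ (1 + 2 * a) / ((idx i) ^ (1 + 2 * a) + n) := by positivity
  exact mul_le_mul_of_nonneg_right (by nlinarith) (sq_nonneg _)

lemma biasSqTrunc_cont (n k : ℕ) (θ0 : ℕ → ℝ) :
    Continuous fun α => biasSqTrunc n k α θ0 := by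
  unfold biasSqTrunc
  apply continuous_finset_sum
  intro i _
  have hrw : ∀ c d : ℝ, (fun α : ℝ => (idx i) ^ (c + d * α)) =
      fun α => Real.exp (Real.log (idx i) * (c + d * α)) := by
    intro c d; funext α; exact Real.rpow_def_of_pos (idx_pos i) _
  have hc1 : Continuous fun α : ℝ => (idx i) ^ (2 + 4 * α) := by
    rw [hrw 2 4]; fun_prop
  have hc2 : Continuous fun α : ℝ => (idx i) ^ (1 + 2 * α) := by
    rw [hrw 1 2]; fun_prop
  apply Continuous.div (by fun_prop)
  · fun_prop
  · intro α
    have : (0:ℝ) < (idx i) ^ (1 + 2 * α) + n := by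
      have := Real.rpow_pos_of_pos (idx_pos i) (1 + 2 * α)
      have : (0:ℝ) ≤ (n:ℝ) := Nat.cast_nonneg n
      positivity
    positivity

/-- The defining set of `underAlpha`/`overAlpha` is closed. -/
lemma defset_closed (D c : ℝ) (hD : 0 < D) (n k : ℕ) (hn : 2 ≤ n) (θ0 : ℕ → ℝ) :
    IsClosed {α : ℝ | D ≤ α ∧ c * (n : ℝ) ^ (-(2 * α) / (1 + 2 * α)) ≤ biasSqTrunc n k α θ0} := by
  have hnpos : (0:ℝ) < n := by positivity
  have hset : {α : ℝ | D ≤ α ∧ c * (n : ℝ) ^ (-(2 * α) / (1 + 2 * α)) ≤ biasSqTrunc n k α θ0}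
      = Set.Ici D ∩ {α : ℝ | c * Real.exp (Real.log n * (-(2 * max α D) / (1 + 2 * max α D)))
          ≤ biasSqTrunc n k α θ0} := by
    ext α
    simp only [Set.mem_setOf_eq, Set.mem_inter_iff, Set.mem_Ici]
    constructor
    · rintro ⟨h1, h2⟩
      refine ⟨h1, ?_⟩
      rwa [max_eq_left h1, ← Real.rpow_def_of_pos hnpos]
    · rintro ⟨h1, h2⟩
      refine ⟨h1, ?_⟩
      rwa [max_eq_left h1, ← Real.rpow_def_of_pos hnpos] at h2
  rw [hset]
  apply isClosed_Ici.inter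
  apply isClosed_le
  · apply Continuous.mul continuous_const
    apply Real.continuous_exp.comp
    apply Continuous.mul continuous_const
    apply Continuous.div (by fun_prop) (by fun_prop)
    intro α
    have : D ≤ max α D := le_max_right _ _
    intro h; linarith [le_max_right α D]
  · exact biasSqTrunc_cont n k θ0

lemma infAux_le (S : Set ℝ) (c : ℝ) : infAux S c ≤ c := by
  unfold infAux; split
  · exact min_le_right _ _
  · exact le_rfl

/-- Main auxiliary lemma, with opaque `cap`. -/
lemma main_aux (D C1 cap : ℝ) (hD : 0 < D) (hC1 : 0 < C1) (hcapD : D ≤ cap)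
    (n k : ℕ) (hn : 2 ≤ n) (θ0 : ℕ → ℝ) :
    (n : ℝ) ^ (-(infAux {α | D ≤ α ∧ C1 ^ 2 / 2 * (n : ℝ) ^ (-(2 * α) / (1 + 2 * α)) ≤ biasSqTrunc n k α θ0} cap)
        / (1 + 2 * infAux {α | D ≤ α ∧ C1 ^ 2 / 2 * (n : ℝ) ^ (-(2 * α) / (1 + 2 * α)) ≤ biasSqTrunc n k α θ0} cap))
      ≤ 2 * (n : ℝ) ^ (-(infAux {α | D ≤ α ∧ 2 * C1 ^ 2 * (n : ℝ) ^ (-(2 * α) / (1 + 2 * α)) ≤ biasSqTrunc n k α θ0} cap)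
        / (1 + 2 * infAux {α | D ≤ α ∧ 2 * C1 ^ 2 * (n : ℝ) ^ (-(2 * α) / (1 + 2 * α)) ≤ biasSqTrunc n k α θ0} cap)) := by
  classical
  obtain ⟨S₁, hS₁⟩ : ∃ S : Set ℝ,
      S = {α | D ≤ α ∧ C1 ^ 2 / 2 * (n : ℝ) ^ (-(2 * α) / (1 + 2 * α)) ≤ biasSqTrunc n k α θ0} := ⟨_, rfl⟩
  obtain ⟨S₂, hS₂⟩ : ∃ S : Set ℝ,
      S = {α | D ≤ α ∧ 2 * C1 ^ 2 * (n : ℝ) ^ (-(2 * α) / (1 + 2 * α)) ≤ biasSqTrunc n k α θ0} := ⟨_, rfl⟩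
  rw [← hS₁, ← hS₂]
  obtain ⟨A, hA⟩ : ∃ a : ℝ, a = infAux S₁ cap := ⟨_, rfl⟩
  obtain ⟨Ab, hB⟩ : ∃ a : ℝ, a = infAux S₂ cap := ⟨_, rfl⟩
  rw [← hA, ← hB]
  have hnpos : (0:ℝ) < n := by positivity
  have hn1 : (1:ℝ) ≤ n := by exact_mod_cast Nat.one_le_of_lt hn
  have hn1' : (1:ℝ) < n := by exact_mod_cast hn
  have hlogn : (0:ℝ) < Real.log n := Real.log_pos hn1'
  have hS₁bdd : BddBelow S₁ := ⟨D, fun x hx => (hS₁ ▸ hx).1⟩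
  have hS₂bdd : BddBelow S₂ := ⟨D, fun x hx => (hS₂ ▸ hx).1⟩
  -- S₂ ⊆ S₁
  have hsub : S₂ ⊆ S₁ := by
    rw [hS₁, hS₂]
    intro α hα
    refine ⟨hα.1, le_trans ?_ hα.2⟩
    have hx : (0:ℝ) < (n : ℝ) ^ (-(2 * α) / (1 + 2 * α)) := Real.rpow_pos_of_pos hnpos _
    nlinarith [sq_nonneg C1]
  -- D ≤ A, D ≤ Ab
  have hDA : D ≤ A := by
    rw [hA]; unfold infAux; split
    · rename_i h
      exact le_min (le_csInf h fun b hb => (hS₁ ▸ hb).1) hcapD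
    · exact hcapD
  have hDAb : D ≤ Ab := by
    rw [hB]; unfold infAux; split
    · rename_i h
      exact le_min (le_csInf h fun b hb => (hS₂ ▸ hb).1) hcapD
    · exact hcapD
  have hAcap : A ≤ cap := hA ▸ infAux_le _ _
  have hAbcap : Ab ≤ cap := hB ▸ infAux_le _ _
  have hApos : 0 < A := lt_of_lt_of_le hD hDA
  have hAbpos : 0 < Ab := lt_of_lt_of_le hD hDAb
  have h1A : 0 < 1 + 2 * A := by linarith
  have h1Ab : 0 < 1 + 2 * Ab := by linarith
  have hgmono : ∀ x y : ℝ, 0 < 1 + 2 * x → 0 < 1 + 2 * y → x ≤ y →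
      -y / (1 + 2 * y) ≤ -x / (1 + 2 * x) := by
    intro x y hx hy hxy
    rw [div_le_div_iff₀ hy hx]
    nlinarith
  have hAAb : A ≤ Ab := by
    rw [hA, hB]; unfold infAux
    by_cases h2 : S₂.Nonempty
    · have h1 : S₁.Nonempty := h2.mono hsub
      rw [if_pos h1, if_pos h2]
      exact min_le_min (csInf_le_csInf hS₁bdd h2 hsub) le_rfl
    · rw [if_neg h2]
      exact infAux_le _ _
  by_cases hcase : cap ≤ A
  · have hAAb' : Ab = A := le_antisymm (le_trans hAbcap hcase) hAAb
    rw [hAAb']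
    have hx : (0:ℝ) < (n : ℝ) ^ (-A / (1 + 2 * A)) := Real.rpow_pos_of_pos hnpos _
    linarith
  · push_neg at hcase
    have hS₁ne : S₁.Nonempty := by
      by_contra h
      rw [hA] at hcase; unfold infAux at hcase
      rw [if_neg h] at hcase; exact lt_irrefl _ hcase
    have hAeq : A = sInf S₁ := by
      have hA' : A = min (sInf S₁) cap := by
        rw [hA]; unfold infAux; rw [if_pos hS₁ne]
      rcases min_cases (sInf S₁) cap with ⟨h1, h2⟩ | ⟨h1, h2⟩
      · exact hA'.trans h1
      · exfalso; rw [hA', h1] at hcase; exact lt_irrefl _ hcase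
    have hmemA : A ∈ S₁ := by
      rw [hAeq]
      exact (hS₁ ▸ (defset_closed D (C1^2/2) hD n k hn θ0) :
        IsClosed S₁).csInf_mem hS₁ne hS₁bdd
    have hcond : C1 ^ 2 / 2 * (n : ℝ) ^ (-(2 * A) / (1 + 2 * A)) ≤ biasSqTrunc n k A θ0 :=
      (hS₁ ▸ hmemA).2
    by_cases hdeg : Real.log n / (1 + 2 * A) ≤ Real.log 4
    · -- degenerate case
      have h1 : -A / (1 + 2 * A) = -(1/2) + 1 / (2 * (1 + 2 * A)) := by
        field_simp; ring
      have h2 : (n:ℝ) ^ (-A / (1 + 2 * A))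
          = (n:ℝ) ^ (-(1/2):ℝ) * (n:ℝ) ^ (1 / (2 * (1 + 2 * A))) := by
        rw [h1, Real.rpow_add hnpos]
      have h3 : (n:ℝ) ^ (1 / (2 * (1 + 2 * A))) ≤ 2 := by
        rw [Real.rpow_def_of_pos hnpos]
        have hkey : Real.log n * (1 / (2 * (1 + 2 * A))) ≤ Real.log 2 := by
          have h4 : Real.log (4:ℝ) = 2 * Real.log 2 := by
            rw [show (4:ℝ) = 2^2 by norm_num, Real.log_pow]; push_cast; ring
          rw [mul_one_div]
          rw [div_le_iff₀ h1A] at hdeg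
          rw [div_le_iff₀ (by positivity)]
          nlinarith [Real.log_pos (by norm_num : (1:ℝ) < 2)]
        calc Real.exp (Real.log n * (1 / (2 * (1 + 2 * A)))) ≤ Real.exp (Real.log 2) :=
              Real.exp_le_exp.mpr hkey
          _ = 2 := Real.exp_log (by norm_num)
      have h5 : (n:ℝ) ^ (-(1/2):ℝ) ≤ (n:ℝ) ^ (-Ab / (1 + 2 * Ab)) := by
        apply Real.rpow_le_rpow_of_exponent_le hn1
        rw [neg_div, le_neg]
        rw [div_le_iff₀ h1Ab]
        linarith
      calc (n:ℝ) ^ (-A / (1 + 2 * A)) = (n:ℝ) ^ (-(1/2):ℝ) * (n:ℝ) ^ (1 / (2 * (1 + 2 * A))) := h2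
        _ ≤ (n:ℝ) ^ (-(1/2):ℝ) * 2 :=
            mul_le_mul_of_nonneg_left h3 (Real.rpow_pos_of_pos hnpos _).le
        _ = 2 * (n:ℝ) ^ (-(1/2):ℝ) := by ring
        _ ≤ 2 * (n:ℝ) ^ (-Ab / (1 + 2 * Ab)) := by linarith [h5]
    · -- main case
      push_neg at hdeg
      obtain ⟨r, hr⟩ : ∃ r : ℝ, r = 2 * A / (1 + 2 * A) + Real.log 4 / Real.log n := ⟨_, rfl⟩
      have hlog4 : (0:ℝ) < Real.log 4 := Real.log_pos (by norm_num)
      have hr0 : 0 < r := by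
        rw [hr]; positivity
      have hr1 : r < 1 := by
        have h1 : Real.log 4 / Real.log n < 1 / (1 + 2 * A) := by
          rw [div_lt_div_iff₀ hlogn h1A]
          rw [lt_div_iff₀ h1A] at hdeg
          nlinarith
        have h2 : 2 * A / (1 + 2 * A) + 1 / (1 + 2 * A) = 1 := by
          field_simp
          ring
        linarith [hr]
      have h1r : (0:ℝ) < 1 - r := by linarith
      obtain ⟨β, hβ⟩ : ∃ b : ℝ, b = r / (2 * (1 - r)) := ⟨_, rfl⟩
      have hβpos : 0 < β := by rw [hβ]; positivity
      have h1β : 0 < 1 + 2 * β := by linarith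
      have hβr : 2 * β / (1 + 2 * β) = r := by
        rw [hβ]; rw [div_eq_iff (by rw [hβ] at h1β; positivity)]
        field_simp
        ring
      have hrA : 2 * A / (1 + 2 * A) ≤ r := by
        have : 0 < Real.log 4 / Real.log n := by positivity
        linarith [hr]
      have hβA : A ≤ β := by
        have h1 : 2 * A / (1 + 2 * A) ≤ 2 * β / (1 + 2 * β) := by rw [hβr]; exact hrA
        rw [div_le_div_iff₀ h1A h1β] at h1
        linarith
      have hquarter : (n:ℝ) ^ (-(Real.log 4 / Real.log n)) = 1/4 := by
        rw [Real.rpow_def_of_pos hnpos]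
        rw [show Real.log n * -(Real.log 4 / Real.log n) = -Real.log 4 by field_simp]
        rw [Real.exp_neg, Real.exp_log (by norm_num : (0:ℝ) < 4)]
        norm_num
      have hβmem : β ∈ S₂ := by
        rw [hS₂]
        refine ⟨le_trans hDA hβA, ?_⟩
        have hkey : 2 * C1 ^ 2 * (n:ℝ) ^ (-(2 * β) / (1 + 2 * β))
            = C1 ^ 2 / 2 * (n:ℝ) ^ (-(2 * A) / (1 + 2 * A)) := by
          have h1 : -(2 * β) / (1 + 2 * β) = -(2 * A) / (1 + 2 * A) + -(Real.log 4 / Real.log n) := by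
            rw [neg_div, neg_div, hβr, hr]; ring
          rw [h1, Real.rpow_add hnpos, hquarter]; ring
        rw [hkey]
        exact le_trans hcond (biasSqTrunc_mono n k θ0 hβA)
      have hS₂ne : S₂.Nonempty := ⟨β, hβmem⟩
      have hAbβ : Ab ≤ β := by
        rw [hB]; unfold infAux; rw [if_pos hS₂ne]
        exact le_trans (min_le_left _ _) (csInf_le hS₂bdd hβmem)
      have hhalf : (n:ℝ) ^ (-(Real.log 2 / Real.log n)) = 1/2 := by
        rw [Real.rpow_def_of_pos hnpos]
        rw [show Real.log n * -(Real.log 2 / Real.log n) = -Real.log 2 by field_simp]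
        rw [Real.exp_neg, Real.exp_log (by norm_num : (0:ℝ) < 2)]
        norm_num
      have hlog42 : Real.log (4:ℝ) = 2 * Real.log 2 := by
        rw [show (4:ℝ) = 2^2 by norm_num, Real.log_pow]; push_cast; ring
      have hβhalf : (n:ℝ) ^ (-β / (1 + 2 * β))
          = (n:ℝ) ^ (-A / (1 + 2 * A)) * (1/2) := by
        have h2 : β / (1 + 2 * β) = r / 2 := by
          rw [show β / (1 + 2 * β) = (2 * β / (1 + 2 * β)) / 2 from by ring, hβr]
        have h1 : -β / (1 + 2 * β) = -A / (1 + 2 * A) + -(Real.log 2 / Real.log n) := by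
          rw [neg_div, h2, hr, hlog42]
          field_simp
          ring
        rw [h1, Real.rpow_add hnpos, hhalf]
      have hfinal : (n:ℝ) ^ (-β / (1 + 2 * β)) ≤ (n:ℝ) ^ (-Ab / (1 + 2 * Ab)) :=
        Real.rpow_le_rpow_of_exponent_le hn1 (hgmono Ab β h1Ab h1β hAbβ)
      calc (n:ℝ) ^ (-A / (1 + 2 * A)) = 2 * ((n:ℝ) ^ (-A / (1 + 2 * A)) * (1/2)) := by ring
        _ = 2 * (n:ℝ) ^ (-β / (1 + 2 * β)) := by rw [hβhalf]
        _ ≤ 2 * (n:ℝ) ^ (-Ab / (1 + 2 * Ab)) := by linarith [hfinal]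

/-- `n^{-α̲_n/(1+2α̲_n)} ≤ 2 n^{-ᾱ_n/(1+2ᾱ_n)}` for every `θ0 ∈ ℓ²`. -/
theorem stmt_11 (D C1 γ : ℝ) (hD : 0 < D) (hC1 : 0 < C1) (hγ : γ ∈ Set.Ioo (0 : ℝ) 1)
    (n : ℕ) (hn : 2 ≤ n) (θ0 : ℕ → ℝ) (hθ0 : Summable fun i => (θ0 i) ^ 2) :
    (n : ℝ) ^ (-(underAlpha D C1 γ n θ0) / (1 + 2 * underAlpha D C1 γ n θ0))
      ≤ 2 * (n : ℝ) ^ (-(overAlpha D C1 γ n θ0) / (1 + 2 * overAlpha D C1 γ n θ0)) := by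
  unfold underAlpha overAlpha
  exact main_aux D C1 (capVal D C1 γ n) hD hC1 (le_max_right _ _) n (khat D n) hn θ0
end
end

section
/- Let θ0 be the counterexample signal and let N_j = n_j^{1/(1+2β)}. Then for every D' ≥ β and every j, the squared bias satisfies ∑_{i≥1} i^{2+4D'} θ0,i²/(i^{1+2D'}+n_j)² ≥ (1/4) ∑_{N_j ≤ i < 2N_j} θ0,i² ≥ K 2^{−3−2β} n_j^{−2β/(1+2β)}. -/
open MeasureTheory ProbabilityTheory Real Filter
open scoped NNReal ENNReal

noncomputable section

/-- The block-boundary `N_j = n_j^{1/(1+2β)}` associated with `n_j`. -/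
def blockEdge (β : ℝ) (m : ℕ) : ℝ := (m : ℝ) ^ (1 / (1 + 2 * β))

/-- The counterexample signal: `θ0_i² = K i^{−1−2β}` if `n_j^{1/(1+2β)} ≤ i < 2 n_j^{1/(1+2β)}`
for some `j`, and `θ0_i = 0` otherwise (coordinate `i : ℕ` has actual index `i+1`). -/
def counterSignal (β K : ℝ) (nseq : ℕ → ℕ) : ℕ → ℝ :=
  Set.indicator {i : ℕ | ∃ j, blockEdge β (nseq j) ≤ idx i ∧ idx i < 2 * blockEdge β (nseq j)}
    (fun i => Real.sqrt (K * (idx i) ^ (-(1 + 2 * β))))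

/-- The growth conditions on the sequence `n_j`: `n_1 ≥ 2`, strictly increasing,
and `n_{j+1}/n_j^{1+4D} → ∞`. -/
def goodSeq (D : ℝ) (nseq : ℕ → ℕ) : Prop :=
  2 ≤ nseq 0 ∧ StrictMono nseq ∧
    Filter.Tendsto (fun j => (nseq (j + 1) : ℝ) / (nseq j : ℝ) ^ (1 + 4 * D))
      Filter.atTop Filter.atTop

set_option maxHeartbeats 1000000 in
/-- lower bound on the squared bias of the counterexample signal at any `D' ≥ β`. -/
theorem stmt_15 (D β K : ℝ) (hD : 0 < D) (hβ : β ∈ Set.Ico D (2 * D)) (hK : 0 < K)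
    (nseq : ℕ → ℕ) (hseq : goodSeq D nseq) (D' : ℝ) (hD' : β ≤ D') (j : ℕ) :
    (1 / 4) * (∑' i : ℕ, Set.indicator
          {i : ℕ | blockEdge β (nseq j) ≤ idx i ∧ idx i < 2 * blockEdge β (nseq j)}
          (fun i => (counterSignal β K nseq i) ^ 2) i)
      ≤ ∑' i : ℕ, (idx i) ^ (2 + 4 * D') * (counterSignal β K nseq i) ^ 2
          / ((idx i) ^ (1 + 2 * D') + (nseq j : ℕ)) ^ 2 ∧
    K * 2 ^ (-(3 + 2 * β)) * (nseq j : ℝ) ^ (-(2 * β) / (1 + 2 * β))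
      ≤ (1 / 4) * (∑' i : ℕ, Set.indicator
          {i : ℕ | blockEdge β (nseq j) ≤ idx i ∧ idx i < 2 * blockEdge β (nseq j)}
          (fun i => (counterSignal β K nseq i) ^ 2) i) := by
  obtain ⟨hβD, hβ2D⟩ := hβ
  have hβ0 : 0 < β := lt_of_lt_of_le hD hβD
  have hs1 : (1:ℝ) < 1 + 2 * β := by linarith
  set n : ℕ := nseq j with hn_def
  have hn2 : 2 ≤ n := le_trans hseq.1 (hseq.2.1.monotone (Nat.zero_le j))
  have hn1 : (1:ℝ) < (n:ℝ) := by exact_mod_cast lt_of_lt_of_le one_lt_two (by exact_mod_cast hn2)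
  set N : ℝ := blockEdge β n with hN_def
  have hN1 : 1 < N := by
    rw [hN_def, blockEdge]
    exact (Real.one_lt_rpow_iff_of_pos (by linarith)).2 (Or.inl ⟨hn1, by positivity⟩)
  have hN0 : 0 < N := by linarith
  have hNs : N ^ (1 + 2 * β) = (n:ℝ) := by
    rw [hN_def, blockEdge, ← Real.rpow_mul (by positivity), one_div,
      inv_mul_cancel₀ (by positivity), Real.rpow_one]
  have hidx : ∀ i : ℕ, 0 < idx i := by
    intro i; rw [idx]; positivity
  have hidx1 : ∀ i : ℕ, 1 ≤ idx i := by
    intro i; rw [idx]; have : (0:ℝ) ≤ (i:ℝ) := Nat.cast_nonneg i; linarith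
  have hcs : ∀ i : ℕ, N ≤ idx i → idx i < 2 * N →
      counterSignal β K nseq i ^ 2 = K * (idx i) ^ (-(1 + 2 * β)) := by
    intro i h1 h2
    have hmem : i ∈ {i : ℕ | ∃ j, blockEdge β (nseq j) ≤ idx i ∧ idx i < 2 * blockEdge β (nseq j)} :=
      ⟨j, h1, h2⟩
    rw [counterSignal, Set.indicator_of_mem hmem,
      Real.sq_sqrt (by have := hidx i; positivity)]
  have hcs_le : ∀ i : ℕ, counterSignal β K nseq i ^ 2 ≤ K * (idx i) ^ (-(1 + 2 * β)) := by
    intro i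
    rw [counterSignal]
    by_cases hi : i ∈ {i : ℕ | ∃ j, blockEdge β (nseq j) ≤ idx i ∧ idx i < 2 * blockEdge β (nseq j)}
    · rw [Set.indicator_of_mem hi, Real.sq_sqrt (by have := hidx i; positivity)]
    · rw [Set.indicator_of_notMem hi, zero_pow two_ne_zero]
      have := hidx i; positivity
  have hdom : Summable (fun i : ℕ => K * (idx i) ^ (-(1 + 2 * β))) := by
    apply Summable.mul_left
    have h1 : Summable (fun i : ℕ => (i:ℝ) ^ (-(1 + 2 * β))) :=
      Real.summable_nat_rpow.2 (by linarith)
    have h2 := (summable_nat_add_iff 1).2 h1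
    refine h2.congr fun i => ?_
    rw [idx]; push_cast; ring_nf
  set a : ℕ := ⌈N⌉₊ with ha_def
  set b : ℕ := ⌈2 * N⌉₊ with hb_def
  have ha2 : 2 ≤ a := Nat.lt_ceil.2 (by exact_mod_cast hN1)
  have hab : a ≤ b := Nat.ceil_le_ceil (by linarith : N ≤ 2 * N)
  have hb3 : 3 ≤ b := Nat.lt_ceil.2 (by push_cast; linarith)
  have haN : (a:ℝ) < N + 1 := Nat.ceil_lt_add_one hN0.le
  have hbN : (b:ℝ) < 2 * N + 1 := Nat.ceil_lt_add_one (by linarith)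
  have hNa : N ≤ (a:ℝ) := Nat.le_ceil N
  have h2ab : 2 * a ≤ b + 1 := by
    have h1 : ((2 * a - 2 : ℕ) : ℝ) < 2 * N := by
      push_cast [Nat.cast_sub (by omega : 2 ≤ 2 * a)]
      linarith
    have := Nat.lt_ceil.2 h1
    omega
  have hset : {i : ℕ | N ≤ idx i ∧ idx i < 2 * N} = ↑(Finset.Ico (a - 1) (b - 1)) := by
    ext i
    simp only [Set.mem_setOf_eq, Finset.coe_Ico, Set.mem_Ico]
    constructor
    · rintro ⟨h1, h2⟩
      have hA : a ≤ i + 1 := Nat.ceil_le.2 (by rw [idx] at h1; push_cast; linarith)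
      have hB : i + 1 < b := Nat.lt_ceil.2 (by rw [idx] at h2; push_cast; linarith)
      omega
    · rintro ⟨h1, h2⟩
      have hA : a ≤ i + 1 := by omega
      have hB : i + 1 < b := by omega
      have hA' := Nat.ceil_le.1 hA
      have hB' := Nat.lt_ceil.1 hB
      constructor
      · rw [idx]; push_cast at hA' ⊢; linarith
      · rw [idx]; push_cast at hB' ⊢; linarith
  set A : Set ℕ := {i : ℕ | N ≤ idx i ∧ idx i < 2 * N} with hA_def
  set f : ℕ → ℝ := Set.indicator A (fun i => (counterSignal β K nseq i) ^ 2) with hf_def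
  have hf_nonneg : ∀ i, 0 ≤ f i := fun i => Set.indicator_nonneg (fun i _ => sq_nonneg _) i
  have hf_le : ∀ i, f i ≤ K * (idx i) ^ (-(1 + 2 * β)) := by
    intro i
    by_cases hi : i ∈ A
    · rw [hf_def, Set.indicator_of_mem hi]; exact hcs_le i
    · rw [hf_def, Set.indicator_of_notMem hi]; have := hidx i; positivity
  have hf_summable : Summable f := Summable.of_nonneg_of_le hf_nonneg hf_le hdom
  have hA_eq : ∀ i, (idx i) ^ (2 + 4 * D') = ((idx i) ^ (1 + 2 * D')) ^ 2 := by
    intro i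
    rw [← Real.rpow_natCast ((idx i) ^ (1 + 2 * D')) 2, ← Real.rpow_mul (hidx i).le]
    norm_num
    ring_nf
  constructor
  · -- first inequality
    rw [← tsum_mul_left]
    set g : ℕ → ℝ := fun i => (idx i) ^ (2 + 4 * D') * (counterSignal β K nseq i) ^ 2
        / ((idx i) ^ (1 + 2 * D') + (n : ℕ)) ^ 2 with hg_def
    have hg_nonneg : ∀ i, 0 ≤ g i := by
      intro i; have h1 := hidx i
      rw [hg_def]
      positivity
    have hg_le : ∀ i, g i ≤ (counterSignal β K nseq i) ^ 2 := by
      intro i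
      have hP := hidx i
      have hx0 : (0:ℝ) < (idx i) ^ (1 + 2 * D') := Real.rpow_pos_of_pos hP _
      have hBpos : (0:ℝ) < ((idx i) ^ (1 + 2 * D') + (n:ℝ)) ^ 2 := by positivity
      rw [hg_def]
      simp only []
      rw [div_le_iff₀ hBpos]
      have hAB : (idx i) ^ (2 + 4 * D') ≤ ((idx i) ^ (1 + 2 * D') + (n:ℝ)) ^ 2 := by
        rw [hA_eq i]
        nlinarith [Nat.cast_nonneg (α := ℝ) n, hx0.le]
      nlinarith [sq_nonneg (counterSignal β K nseq i), hAB]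
    have hg_summable : Summable g :=
      Summable.of_nonneg_of_le hg_nonneg (fun i => (hg_le i).trans (hcs_le i)) hdom
    refine Summable.tsum_le_tsum ?_ (hf_summable.mul_left _) hg_summable
    intro i
    by_cases hi : i ∈ A
    · rw [hf_def, Set.indicator_of_mem hi]
      obtain ⟨h1, h2⟩ := hi
      have hP := hidx i
      have hn_le : (n:ℝ) ≤ (idx i) ^ (1 + 2 * D') := by
        calc (n:ℝ) = N ^ (1 + 2 * β) := hNs.symm
          _ ≤ (idx i) ^ (1 + 2 * β) := Real.rpow_le_rpow hN0.le h1 (by linarith)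
          _ ≤ (idx i) ^ (1 + 2 * D') := Real.rpow_le_rpow_of_exponent_le (hidx1 i) (by linarith)
      have hx0 : (0:ℝ) < (idx i) ^ (1 + 2 * D') := Real.rpow_pos_of_pos hP _
      have hB_le : ((idx i) ^ (1 + 2 * D') + (n:ℝ)) ^ 2 ≤ 4 * (idx i) ^ (2 + 4 * D') := by
        rw [hA_eq i]
        nlinarith [hn_le, hx0.le, Nat.cast_nonneg (α := ℝ) n]
      have hBpos : (0:ℝ) < ((idx i) ^ (1 + 2 * D') + (n:ℝ)) ^ 2 := by positivity
      rw [le_div_iff₀ hBpos]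
      have := mul_le_mul_of_nonneg_left hB_le (sq_nonneg (counterSignal β K nseq i))
      nlinarith [this]
    · rw [hf_def, Set.indicator_of_notMem hi, mul_zero]
      exact hg_nonneg i
  · -- second inequality
    set M : ℝ := (b:ℝ) - 1 with hM_def
    have hb3' : (3:ℝ) ≤ (b:ℝ) := by exact_mod_cast hb3
    have hM0 : 0 < M := by rw [hM_def]; linarith
    have hM2N : M < 2 * N := by rw [hM_def]; linarith
    have htsum : ∑' i, f i = ∑ i ∈ Finset.Ico (a-1) (b-1), f i := by
      apply tsum_eq_sum
      intro i hi
      rw [hf_def]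
      apply Set.indicator_of_notMem
      show i ∉ A
      rw [hset]
      simpa using hi
    have hterm : ∀ i ∈ Finset.Ico (a-1) (b-1), K * M ^ (-(1 + 2 * β)) ≤ f i := by
      intro i hi
      have hi' : i ∈ A := by rw [hset]; simpa using hi
      have hp : N ≤ idx i ∧ idx i < 2 * N := hi'
      obtain ⟨h1, h2⟩ := hp
      rw [hf_def, Set.indicator_of_mem hi', hcs i h1 h2]
      have hib : i + 1 ≤ b - 1 := by
        rw [Finset.mem_Ico] at hi; omega
      have hidxM : idx i ≤ M := by
        have h3 : ((i+1 : ℕ):ℝ) ≤ ((b - 1 : ℕ):ℝ) := by exact_mod_cast hib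
        rw [idx, hM_def]
        push_cast [Nat.cast_sub (by omega : 1 ≤ b)] at h3
        linarith
      exact mul_le_mul_of_nonneg_left
        (Real.rpow_le_rpow_of_nonpos (hidx i) hidxM (by linarith)) hK.le
    have hcard : (Finset.Ico (a-1) (b-1)).card = b - a := by
      rw [Nat.card_Ico]; omega
    have hsum_ge : ((b - a : ℕ):ℝ) * (K * M ^ (-(1 + 2 * β)))
        ≤ ∑ i ∈ Finset.Ico (a-1) (b-1), f i := by
      calc ((b - a : ℕ):ℝ) * (K * M ^ (-(1 + 2 * β)))
          = ∑ _i ∈ Finset.Ico (a-1) (b-1), K * M ^ (-(1 + 2 * β)) := by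
            rw [Finset.sum_const, hcard, nsmul_eq_mul]
        _ ≤ _ := Finset.sum_le_sum hterm
    have hc_ge : M / 2 ≤ ((b - a : ℕ):ℝ) := by
      have hcast : ((b - a : ℕ):ℝ) = (b:ℝ) - (a:ℝ) := by
        push_cast [Nat.cast_sub hab]; ring
      have h2ab' : 2 * (a:ℝ) ≤ (b:ℝ) + 1 := by exact_mod_cast h2ab
      rw [hcast, hM_def]; linarith
    have hn_pow : (n:ℝ) ^ (-(2*β)/(1+2*β)) = N ^ (-(2*β)) := by
      rw [hN_def, blockEdge, ← Real.rpow_mul (by positivity)]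
      congr 1
      field_simp
    have hMpow : M * M ^ (-(1+2*β)) = M ^ (-(2*β)) := by
      nth_rewrite 1 [← Real.rpow_one M]
      rw [← Real.rpow_add hM0]
      congr 1
      ring
    have hM_rpow_ge : (2*N) ^ (-(2*β)) ≤ M ^ (-(2*β)) :=
      Real.rpow_le_rpow_of_nonpos hM0 hM2N.le (by linarith)
    have h2pow : (2:ℝ) ^ (-(3 + 2*β)) = (1/8) * 2 ^ (-(2*β)) := by
      rw [show -(3+2*β) = (-3) + (-(2*β)) from by ring, Real.rpow_add (by norm_num)]
      congr 1
      rw [show (-3 : ℝ) = -((3:ℕ):ℝ) from by norm_num, Real.rpow_neg (by norm_num),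
        Real.rpow_natCast]
      norm_num
    have hMrp : (0:ℝ) < M ^ (-(1+2*β)) := Real.rpow_pos_of_pos hM0 _
    have key : 2 ^ (-(2*β)) * N ^ (-(2*β)) ≤ M * M ^ (-(1+2*β)) := by
      rw [hMpow, ← Real.mul_rpow (by norm_num) hN0.le]
      exact hM_rpow_ge
    calc K * 2 ^ (-(3 + 2 * β)) * (n:ℝ) ^ (-(2 * β) / (1 + 2 * β))
        = (1/8) * (K * (2 ^ (-(2*β)) * N ^ (-(2*β)))) := by
          rw [show (-(2 * β) / (1 + 2 * β)) = (-(2*β)/(1+2*β)) from by ring, hn_pow, h2pow]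
          ring
      _ ≤ (1/8) * (K * (M * M ^ (-(1+2*β)))) := by
          have h := mul_le_mul_of_nonneg_left key hK.le
          exact mul_le_mul_of_nonneg_left h (by norm_num)
      _ = (1/4) * ((M/2) * (K * M ^ (-(1+2*β)))) := by ring
      _ ≤ (1/4) * (((b - a : ℕ):ℝ) * (K * M ^ (-(1+2*β)))) := by
          have hY : (0:ℝ) ≤ K * M ^ (-(1+2*β)) := by positivity
          have := mul_le_mul_of_nonneg_right hc_ge hY
          linarith
      _ ≤ (1/4) * (∑' i, f i) := by
          rw [htsum]
          linarith [hsum_ge]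
end
end
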